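/- arXiv:2605.02522 — 12 statements merged into one kernel-verified Lean document; each statement's English description precedes it below -/
import Mathlib

section
/- Let Γ be the graph with 22 vertices γ₀,…,γ₈, δ₀,…,δ₈, ρ, ε₀, ε₁, ε₂ and edges γ₁–γ₃, γ₃–γ₄, γ₄–γ₅, γ₅–γ₆, γ₆–γ₇, γ₇–γ₈, γ₈–γ₀, γ₄–γ₂, δ₁–δ₃, δ₃–δ₄, δ₄–δ₅, δ₅–δ₆, δ₆–δ₇, δ₇–δ₈, δ₈–δ₀, δ₄–δ₂, γ₀–ρ, δ₀–ρ, ρ–ε₀, ε₀–ε₁, ε₁–ε₂. Let A be its 22×22 adjacency matrix and N = A − 2·I. Then: (1) the kernel of N acting on ℚ²² is one-dimensional, spanned by the vector a − b, where a = 2γ₁+3γ₂+4γ₃+6γ₄+5γ₅+4γ₆+3γ₇+2γ₈+γ₀ and b = 2δ₁+3δ₂+4δ₃+6δ₄+5δ₅+4δ₆+3δ₇+2δ₈+δ₀ (written in the standard basis indexed by the vertices); (2) there exists an invertible real 22×22 matrix P such that Pᵀ·N·P is the diagonal matrix with exactly one diagonal entry equal to 1, twenty diagonal entries equal to −1, and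 one diagonal entry equal to 0 (i.e., the real quadratic form x ↦ xᵀNx has signature (1,20,1)). -/
/-!
The columns of an explicit integral matrix `Q` are pairwise orthogonal for `N`, so
`Qᵀ N Q = diag d` with one positive, twenty negative and one zero entry, and `Q` is invertible
because `Q Q' = 840` for another explicit integral matrix `Q'`. Over a field, a congruence of `N`
with a diagonal matrix having a single zero entry identifies `ker N` with the line spanned by the
matching column of `Q`, here `a - b`. Over `ℝ`, rescaling the `i`-th column of `Q` by
`|d i|^(-1/2)` turns `diag d` into the diagonal matrix of signs.
-/

open Matrix

namespace Stmt0

/-- The edges of the graph `Γ`, with vertices indexed as: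
`γᵢ ↦ i` (for `i = 0, …, 8`), `δᵢ ↦ 9 + i` (for `i = 0, …, 8`),
`ρ ↦ 18`, `ε₀ ↦ 19`, `ε₁ ↦ 20`, `ε₂ ↦ 21`. -/
def edges : List (Fin 22 × Fin 22) :=
  [(1, 3), (3, 4), (4, 5), (5, 6), (6, 7), (7, 8), (8, 0), (4, 2),
   (10, 12), (12, 13), (13, 14), (14, 15), (15, 16), (16, 17), (17, 9), (13, 11),
   (0, 18), (9, 18), (18, 19), (19, 20), (20, 21)]

/-- The adjacency matrix of the graph `Γ`. -/
def adj (R : Type*) [Zero R] [One R] : Matrix (Fin 22) (Fin 22) R :=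
  Matrix.of fun i j => if (i, j) ∈ edges ∨ (j, i) ∈ edges then 1 else 0

/-- The Gram matrix `N = A − 2·I`. -/
def N (R : Type*) [Ring R] : Matrix (Fin 22) (Fin 22) R :=
  adj R - 2 • (1 : Matrix (Fin 22) (Fin 22) R)

/-- The vector `a = 2γ₁+3γ₂+4γ₃+6γ₄+5γ₅+4γ₆+3γ₇+2γ₈+γ₀`. -/
def a : Fin 22 → ℚ :=
  ![1, 2, 3, 4, 6, 5, 4, 3, 2, 0, 0, 0, 0, 0, 0, 0, 0, 0, 0, 0, 0, 0]

/-- The vector `b = 2δ₁+3δ₂+4δ₃+6δ₄+5δ₅+4δ₆+3δ₇+2δ₈+δ₀`. -/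
def b : Fin 22 → ℚ :=
  ![0, 0, 0, 0, 0, 0, 0, 0, 0, 1, 2, 3, 4, 6, 5, 4, 3, 2, 0, 0, 0, 0]

section Congruence

variable {n : Type*} [Fintype n] [DecidableEq n]

section Field

variable {K : Type*} [Field K]

theorem diagonal_mulVec_eq_zero_iff {d : n → K} {i₀ : n} (hd : ∀ i, d i = 0 ↔ i = i₀)
    (w : n → K) : diagonal d *ᵥ w = 0 ↔ ∃ c : K, w = Pi.single i₀ c := by
  constructor
  · intro hw
    refine ⟨w i₀, funext fun i => ?_⟩
    rcases eq_or_ne i i₀ with rfl | hi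
    · simp
    · have := congrFun hw i
      rw [mulVec_diagonal, Pi.zero_apply, mul_eq_zero] at this
      simpa [hi, mt (hd i).1 hi] using this
  · rintro ⟨c, rfl⟩
    rw [diagonal_mulVec_single, (hd i₀).2 rfl, zero_mul, Pi.single_zero]

theorem mulVec_eq_zero_iff_of_transpose_mul_mul_eq_diagonal {N Q : Matrix n n K} {d : n → K}
    {i₀ : n} (hQ : IsUnit Q.det) (hNQ : Qᵀ * N * Q = diagonal d)
    (hd : ∀ i, d i = 0 ↔ i = i₀) (v : n → K) : N *ᵥ v = 0 ↔ ∃ c : K, v = c • Q.col i₀ := by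
  have hQinj : Function.Injective Q.mulVec := mulVec_injective_iff_isUnit.2 <|
    (isUnit_iff_isUnit_det Q).2 hQ
  have hQTinj : Function.Injective Qᵀ.mulVec := mulVec_injective_iff_isUnit.2 <|
    (isUnit_iff_isUnit_det Qᵀ).2 (by rwa [det_transpose])
  obtain ⟨w, rfl⟩ : ∃ w, v = Q *ᵥ w :=
    ⟨Q⁻¹ *ᵥ v, by rw [mulVec_mulVec, mul_nonsing_inv Q hQ, one_mulVec]⟩
  have hker : N *ᵥ (Q *ᵥ w) = 0 ↔ diagonal d *ᵥ w = 0 := by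
    rw [← hNQ, ← mulVec_mulVec, ← mulVec_mulVec, ← hQTinj.eq_iff, mulVec_zero]
  have hcol (c : K) : c • Q.col i₀ = Q *ᵥ Pi.single i₀ c := by
    rw [← mulVec_single_one, ← mulVec_smul, ← Pi.single_smul', smul_eq_mul, mul_one]
  simp only [hker, diagonal_mulVec_eq_zero_iff hd, hcol, hQinj.eq_iff]

end Field

theorem inv_sqrt_abs_mul_mul_inv_sqrt_abs (x : ℝ) (hx : x ≠ 0) :
    (√|x|)⁻¹ * x * (√|x|)⁻¹ = SignType.sign x := by
  have habs : 0 < |x| := abs_pos.2 hx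
  rw [mul_comm, ← mul_assoc, ← mul_inv, Real.mul_self_sqrt habs.le, inv_mul_eq_div,
    div_eq_iff habs.ne', sign_mul_abs]

theorem exists_isUnit_det_transpose_mul_mul_eq_diagonal_sign {N Q : Matrix n n ℝ} {d : n → ℝ}
    (hQ : IsUnit Q.det) (hNQ : Qᵀ * N * Q = diagonal d) :
    ∃ P : Matrix n n ℝ, IsUnit P.det ∧
      Pᵀ * N * P = diagonal fun i => (SignType.sign (d i) : ℝ) := by
  set s : n → ℝ := fun i => if d i = 0 then 1 else (√|d i|)⁻¹
  have hs : ∀ i, s i ≠ 0 := fun i => by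
    by_cases h : d i = 0 <;> simp [s, h]
  refine ⟨Q * diagonal s, ?_, ?_⟩
  · rw [det_mul, det_diagonal]
    exact hQ.mul (isUnit_iff_ne_zero.2 (Finset.prod_ne_zero_iff.2 fun i _ => hs i))
  · have hassoc : (Q * diagonal s)ᵀ * N * (Q * diagonal s) =
        diagonal s * (Qᵀ * N * Q) * diagonal s := by
      simp only [transpose_mul, diagonal_transpose, Matrix.mul_assoc]
    rw [hassoc, hNQ, diagonal_mul_diagonal, diagonal_mul_diagonal]
    congr 1
    funext i
    by_cases h : d i = 0
    · simp [h]
    · simpa [s, h, mul_assoc] using inv_sqrt_abs_mul_mul_inv_sqrt_abs (d i) h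

end Congruence

def Q : Matrix (Fin 22) (Fin 22) ℤ := !![
  2, 0, 0, 0, 0, 0, 0, 0, 0, 0, 0, 0, 0, 0, 0, 0, 0, 0, 0, 0, -5, 1;
  4, 0, 0, 0, 0, 0, 0, 0, 0, 0, 0, 0, 0, 0, 0, 0, 0, 0, 4, 0, -10, 2;
  6, 0, 0, 0, 0, 0, 0, 0, 0, 0, 0, 0, 0, 0, 7, 0, 0, 0, 5, 0, -15, 3;
  8, 0, 0, 0, 0, 0, 0, 0, 0, 0, 0, 5, 1, 0, 5, 0, 0, 0, 7, 0, -20, 4;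
  12, 0, 0, 0, 0, 0, 3, 1, 0, 0, 0, 4, 2, 0, 10, 0, 0, 0, 10, 0, -30, 6;
  10, 0, 0, 0, 2, 0, 2, 2, 0, 0, 0, 3, 3, 0, 8, 0, 0, 0, 8, 0, -25, 5;
  8, 0, 1, 0, 1, 0, 1, 3, 0, 0, 0, 2, 4, 0, 6, 0, 0, 0, 6, 0, -20, 4;
  6, 0, 0, 0, 0, 0, 0, 4, 0, 0, 0, 1, 5, 0, 4, 0, 0, 0, 4, 0, -15, 3;
  4, 0, 0, 0, 0, 0, 0, 0, 0, 0, 0, 0, 6, 0, 2, 0, 0, 0, 2, 0, -10, 2;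
  3, 0, 0, 0, 0, 0, 0, 0, 0, 0, 0, 0, 0, 0, 0, 0, 0, 3, 0, 3, 5, -1;
  0, 0, 0, 0, 0, 0, 0, 0, 0, 0, 0, 0, 0, 0, 0, 1, 3, 0, 0, 0, 4, -2;
  0, 0, 0, 0, 0, 0, 0, 0, 0, 0, 0, 0, 0, 0, 0, 0, 0, 0, 0, 0, 0, -3;
  0, 0, 0, 0, 0, 0, 0, 0, 0, 0, 0, 0, 0, 0, 0, 0, 6, 0, 0, 0, 8, -4;
  0, 0, 0, 0, 0, 0, 0, 0, 0, 0, 0, 0, 0, 2, 0, 0, 4, 0, 0, 0, 12, -6;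
  0, 0, 0, 0, 0, 0, 0, 0, 0, 1, 0, 0, 0, 1, 0, 0, 2, 0, 0, 0, 16, -5;
  0, 0, 0, 0, 0, 0, 0, 0, 0, 0, 0, 0, 0, 0, 0, 0, 0, 0, 0, 0, 20, -4;
  1, 1, 0, 1, 0, 0, 0, 0, 0, 0, 0, 0, 0, 0, 0, 0, 0, 1, 0, 1, 15, -3;
  2, 0, 0, 2, 0, 0, 0, 0, 0, 0, 0, 0, 0, 0, 0, 0, 0, 2, 0, 2, 10, -2;
  4, 0, 0, 0, 0, 1, 0, 0, 0, 0, 1, 0, 0, 0, 0, 0, 0, 2, 0, 4, 0, 0;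
  3, 0, 0, 0, 0, 0, 0, 0, 0, 0, 2, 0, 0, 0, 0, 0, 0, 1, 0, 5, 0, 0;
  2, 0, 0, 0, 0, 0, 0, 0, 0, 0, 0, 0, 0, 0, 0, 0, 0, 0, 0, 6, 0, 0;
  1, 0, 0, 0, 0, 0, 0, 0, 1, 0, 0, 0, 0, 0, 0, 0, 0, 0, 0, 3, 0, 0]

def Q' : Matrix (Fin 22) (Fin 22) ℤ := !![
  420, 0, 0, 0, 0, 0, 0, 0, 0, 0, 0, 0, 0, 0, 0, 105, 0, 0, 0, 0, 0, 0;
  0, 0, 0, 0, 0, 0, 0, 0, 0, 0, 0, 0, 0, 0, 0, -420, 840, -420, 0, 0, 0, 0;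
  0, 0, 0, 0, 0, -420, 840, -420, 0, 0, 0, 0, 0, 0, 0, 0, 0, 0, 0, 0, 0, 0;
  0, 0, 0, 0, 0, 0, 0, 0, 0, -280, 0, 0, 0, 0, 0, -140, 0, 420, 0, 0, 0, 0;
  0, 0, 0, 0, -280, 420, 0, -140, 0, 0, 0, 0, 0, 0, 0, 0, 0, 0, 0, 0, 0, 0;
  -420, 0, 0, 0, 0, 0, 0, 0, 0, -420, 0, 0, 0, 0, 0, 0, 0, 0, 840, -420, 0, 0;
  0, 0, -210, -210, 280, 0, 0, -70, 0, 0, 0, 0, 0, 0, 0, 0, 0, 0, 0, 0, 0, 0;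
  0, 0, -42, -42, 0, 0, 0, 210, -168, 0, 0, 0, 0, 0, 0, 0, 0, 0, 0, 0, 0, 0;
  0, 0, 0, 0, 0, 0, 0, 0, 0, 0, 0, 0, 0, 0, 0, 0, 0, 0, 0, 0, -420, 840;
  0, 0, 0, 0, 0, 0, 0, 0, 0, 0, 0, 0, 0, -420, 840, -420, 0, 0, 0, 0, 0, 0;
  -140, 0, 0, 0, 0, 0, 0, 0, 0, -140, 0, 0, 0, 0, 0, 0, 0, 0, 0, 420, -280, 0;
  0, -140, -112, 168, 0, 0, 0, 0, -28, 0, 0, 0, 0, 0, 0, 0, 0, 0, 0, 0, 0, 0;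
  -120, -20, -40, 0, 0, 0, 0, 0, 140, 0, 0, 0, 0, 0, 0, 0, 0, 0, 0, 0, 0, 0;
  0, 0, 0, 0, 0, 0, 0, 0, 0, 0, 0, -280, -280, 420, 0, -140, 0, 0, 0, 0, 0, 0;
  -60, -150, 120, 0, 0, 0, 0, 0, 0, 0, 0, 0, 0, 0, 0, 0, 0, 0, 0, 0, 0, 0;
  0, 0, 0, 0, 0, 0, 0, 0, 0, 0, 840, 0, -420, 0, 0, 0, 0, 0, 0, 0, 0, 0;
  0, 0, 0, 0, 0, 0, 0, 0, 0, 0, 0, -112, 140, 0, 0, -56, 0, 0, 0, 0, 0, 0;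
  -280, 0, 0, 0, 0, 0, 0, 0, 0, 280, 0, 0, 0, 0, 0, -140, 0, 0, 0, 0, -140, 0;
  -420, 210, 0, 0, 0, 0, 0, 0, 0, 0, 0, 0, 0, 0, 0, 0, 0, 0, 0, 0, 0, 0;
  -140, 0, 0, 0, 0, 0, 0, 0, 0, 0, 0, 0, 0, 0, 0, -35, 0, 0, 0, 0, 140, 0;
  0, 0, 0, 0, 0, 0, 0, 0, 0, 0, 0, -56, 0, 0, 0, 42, 0, 0, 0, 0, 0, 0;
  0, 0, 0, 0, 0, 0, 0, 0, 0, 0, 0, -280, 0, 0, 0, 0, 0, 0, 0, 0, 0, 0]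

def d : Fin 22 → ℤ :=
  ![8, -2, -2, -6, -6, -2, -12, -20, -2, -2, -6, -30, -42, -6, -28, -2, -30, -6, -4, -24, -180, 0]

theorem transpose_Q_mul_N_mul_Q : Qᵀ * N ℤ * Q = diagonal d := by
  decide +kernel

theorem Q_mul_Q' : Q * Q' = (840 : ℤ) • 1 := by
  decide +kernel

theorem det_Q_ne_zero : Q.det ≠ 0 := by
  have h := congrArg det Q_mul_Q'
  rw [det_mul, det_smul, det_one, mul_one] at h
  exact left_ne_zero_of_mul (h.symm ▸ pow_ne_zero _ (by norm_num))

theorem N_map_intCast (R : Type*) [Ring R] : (N ℤ).map (Int.cast : ℤ → R) = N R := by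
  ext i j
  simp only [N, adj, map_apply, Matrix.sub_apply, Matrix.smul_apply, one_apply, of_apply]
  split_ifs <;> norm_num

theorem transpose_Q_mul_N_mul_Q_map (R : Type*) [CommRing R] :
    (Q.map (Int.cast : ℤ → R))ᵀ * N R * Q.map (Int.cast : ℤ → R) =
      diagonal fun i => (d i : R) := by
  have h := congrArg (Int.castRingHom R).mapMatrix transpose_Q_mul_N_mul_Q
  simpa only [map_mul, RingHom.mapMatrix_apply, Int.coe_castRingHom, transpose_map,
    N_map_intCast, diagonal_map, Int.cast_zero] using h

theorem isUnit_det_Q_map (K : Type*) [Field K] [CharZero K] :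
    IsUnit (Q.map (Int.cast : ℤ → K)).det := by
  have h := (Int.castRingHom K).map_det Q
  rw [RingHom.mapMatrix_apply, Int.coe_castRingHom] at h
  rw [isUnit_iff_ne_zero, ← h]
  exact Int.cast_ne_zero.2 det_Q_ne_zero

theorem d_eq_zero_iff (i : Fin 22) : d i = 0 ↔ i = 21 := by
  revert i; decide

theorem sign_d (i : Fin 22) :
    SignType.sign (d i) = if i = 0 then 1 else if i = 21 then 0 else -1 := by
  revert i; decide

theorem Q_map_col_21 : (Q.map (Int.cast : ℤ → ℚ)).col 21 = a - b := by
  ext i; fin_cases i <;> simp [Q, a, b]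

theorem stmt0 :
    (a - b ≠ 0 ∧
      ∀ v : Fin 22 → ℚ, (N ℚ).mulVec v = 0 ↔ ∃ c : ℚ, v = c • (a - b)) ∧
    (∃ P : Matrix (Fin 22) (Fin 22) ℝ, IsUnit P.det ∧
      P.transpose * N ℝ * P =
        Matrix.diagonal (fun i => if i = 0 then (1 : ℝ) else if i = 21 then 0 else -1)) := by
  refine ⟨⟨fun h => by simpa [a, b] using congrFun h 0, fun v => ?_⟩, ?_⟩
  · rw [mulVec_eq_zero_iff_of_transpose_mul_mul_eq_diagonal (isUnit_det_Q_map ℚ)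
      (transpose_Q_mul_N_mul_Q_map ℚ) (by exact_mod_cast d_eq_zero_iff), Q_map_col_21]
  · obtain ⟨P, hP, hPNP⟩ := exists_isUnit_det_transpose_mul_mul_eq_diagonal_sign
      (isUnit_det_Q_map ℝ) (transpose_Q_mul_N_mul_Q_map ℝ)
    refine ⟨P, hP, hPNP.trans (congrArg diagonal (funext fun i => ?_))⟩
    rw [sign_intCast, sign_d]
    split_ifs <;> simp

end Stmt0
end

section
/- Let R be a commutative ring in which 2 = 0, and let W be the Weierstraß curve over R with coefficients a₁, a₂, a₃, a₄, a₆. Then a₁ = 0 and a₃ = 0 if and only if there exist a commutative R-algebra R' which is faithfully flat as an R-module and a change of variables (u, r, s, t) over R' (with u a unit) transforming the base change of W to R' into the Weierstraß curve y² = x³ with all five coefficients equal to 0. -/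
/-!
In characteristic 2 a change of variables gives `a₁' = u⁻¹ a₁` and `a₃' = u⁻³ (a₃ + r a₁)`, so
`a₁ = a₃ = 0` is invariant, and it descends along `R → R'`, which is injective for `R'` faithfully
flat. Conversely, if `a₁ = a₃ = 0`, the substitution with `u = 1` kills `a₂, a₄, a₆` as soon as
`r² = a₄`, `s² = a₂ + r` and `t² = a₆ + r a₄ + r² a₂ + r³`. Since squaring is additive, these are
solved by `r = α²`, `s = β + α`, `t = δ + α² β` from roots `α⁴ = a₄`, `β² = a₂`, `δ² = a₆`, and such
roots exist in a tensor product of algebras `R[X]/(Xⁿ - c)`, which are free, hence faithfully flat.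
-/

universe u

open Polynomial

section Roots

variable {A : Type u} [CommRing A]

theorem exists_faithfullyFlat_pow_eq (c : A) {n : ℕ} (hn : n ≠ 0) :
    ∃ (B : Type u) (_ : CommRing B) (_ : Algebra A B) (_ : Module.FaithfullyFlat A B) (b : B),
      b ^ n = algebraMap A B c := by
  rcases subsingleton_or_nontrivial A with hA | hA
  · exact ⟨A, _, _, inferInstance, 0, Subsingleton.elim _ _⟩
  have hmonic : (X ^ n - C c).Monic := monic_X_pow_sub_C c hn
  have := hmonic.free_adjoinRoot
  have : Nontrivial (AdjoinRoot (X ^ n - C c)) := by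
    refine Ideal.Quotient.nontrivial_iff.mpr ?_
    rw [Ne, Ideal.span_singleton_eq_top, hmonic.isUnit_iff]
    intro h
    simpa [hn] using congrArg natDegree h
  refine ⟨AdjoinRoot (X ^ n - C c), _, _, inferInstance, AdjoinRoot.root _, ?_⟩
  have := AdjoinRoot.eval₂_root (X ^ n - C c)
  rwa [eval₂_sub, eval₂_X_pow, eval₂_C, sub_eq_zero] at this

theorem exists_faithfullyFlat_forall_pow_eq {ι : Type*} (s : Finset ι) (n : ι → ℕ) (c : ι → A)
    (hn : ∀ i ∈ s, n i ≠ 0) :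
    ∃ (B : Type u) (_ : CommRing B) (_ : Algebra A B) (_ : Module.FaithfullyFlat A B),
      ∀ i ∈ s, ∃ b : B, b ^ n i = algebraMap A B (c i) := by
  classical
  induction s using Finset.induction_on with
  | empty => exact ⟨A, _, _, inferInstance, by simp⟩
  | insert i s _ ih =>
    obtain ⟨B₁, _, _, _, b, hb⟩ := exists_faithfullyFlat_pow_eq (c i) (hn i (by simp))
    obtain ⟨B₂, _, _, _, hB₂⟩ := ih fun j hj ↦ hn j (by simp [hj])
    have : Module.FaithfullyFlat A (TensorProduct A B₁ B₂) := .trans A B₁ _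
    refine ⟨TensorProduct A B₁ B₂, _, _, this, ?_⟩
    simp only [Finset.mem_insert, forall_eq_or_imp]
    refine ⟨⟨Algebra.TensorProduct.includeLeft (S := A) b, ?_⟩, fun j hj ↦ ?_⟩
    · rw [← map_pow, hb, AlgHom.commutes]
    · obtain ⟨b', hb'⟩ := hB₂ j hj
      exact ⟨Algebra.TensorProduct.includeRight b', by rw [← map_pow, hb', AlgHom.commutes]⟩

end Roots

namespace WeierstrassCurve

variable {R : Type u} [CommRing R] (h2 : (2 : R) = 0) (W : WeierstrassCurve R)
include h2

theorem variableChange_a₁_eq_zero_and_a₃_eq_zero_iff (C : VariableChange R) :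
    (C • W).a₁ = 0 ∧ (C • W).a₃ = 0 ↔ W.a₁ = 0 ∧ W.a₃ = 0 := by
  simp only [variableChange_a₁, variableChange_a₃, h2, zero_mul, add_zero,
    ← Units.val_pow_eq_pow_val, Units.mul_right_eq_zero]
  exact and_congr_right fun h₁ ↦ by rw [h₁, mul_zero, add_zero]

theorem smul_eq_cusp_of_two_eq_zero (ha₁ : W.a₁ = 0) (ha₃ : W.a₃ = 0) {α β δ : R}
    (hα : α ^ 4 = W.a₄) (hβ : β ^ 2 = W.a₂) (hδ : δ ^ 2 = W.a₆) :
    (⟨1, α ^ 2, β + α, δ + α ^ 2 * β⟩ : VariableChange R) • W =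
      { a₁ := 0, a₂ := 0, a₃ := 0, a₄ := 0, a₆ := 0 } := by
  ext <;> simp only [variableChange_a₁, variableChange_a₂, variableChange_a₃, variableChange_a₄,
    variableChange_a₆, ha₁, ha₃, inv_one, Units.val_one, one_pow, one_mul, ← hα, ← hβ, ← hδ]
  · linear_combination (β + α) * h2
  · linear_combination (α ^ 2 - β * α) * h2
  · linear_combination (α ^ 2 * β + δ) * h2
  · linear_combination (2 * α ^ 4 - α * δ - α ^ 3 * β - β * δ) * h2
  · linear_combination (α ^ 6 - δ * α ^ 2 * β) * h2

end WeierstrassCurve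

/-- Over a commutative ring `R` with `2 = 0`, a Weierstraß curve `W` has `a₁ = 0` and `a₃ = 0`
if and only if, after base change along some faithfully flat `R`-algebra `R'`, some change of
variables transforms it into the Weierstraß curve `y² = x³` (all five coefficients zero). -/
theorem stmt1 {R : Type u} [CommRing R] (h2 : (2 : R) = 0) (W : WeierstrassCurve R) :
    (W.a₁ = 0 ∧ W.a₃ = 0) ↔
      ∃ (R' : Type u) (_ : CommRing R') (_ : Algebra R R')
        (_ : Module.FaithfullyFlat R R') (C : WeierstrassCurve.VariableChange R'),
        C • W.baseChange R' =
          ({ a₁ := 0, a₂ := 0, a₃ := 0, a₄ := 0, a₆ := 0 } : WeierstrassCurve R') := by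
  have two_eq_zero (S : Type u) [CommRing S] [Algebra R S] : (2 : S) = 0 := by
    rw [← map_ofNat (algebraMap R S) 2, h2, map_zero]
  constructor
  · rintro ⟨ha₁, ha₃⟩
    obtain ⟨B, _, _, _, hroots⟩ := exists_faithfullyFlat_forall_pow_eq Finset.univ ![4, 2, 2]
      ![W.a₄, W.a₂, W.a₆] (by decide)
    obtain ⟨α, hα⟩ := hroots 0 (Finset.mem_univ _)
    obtain ⟨β, hβ⟩ := hroots 1 (Finset.mem_univ _)
    obtain ⟨δ, hδ⟩ := hroots 2 (Finset.mem_univ _)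
    exact ⟨B, _, _, ‹_›, _, (W.baseChange B).smul_eq_cusp_of_two_eq_zero (two_eq_zero B)
      (by simp [ha₁]) (by simp [ha₃]) hα hβ hδ⟩
  · rintro ⟨R', _, _, _, C, hC⟩
    have hcoeff := ((W.baseChange R').variableChange_a₁_eq_zero_and_a₃_eq_zero_iff
      (two_eq_zero R') C).mp (by rw [hC]; exact ⟨rfl, rfl⟩)
    have inj := FaithfulSMul.algebraMap_injective R R'
    exact ⟨inj (by simpa using hcoeff.1), inj (by simpa using hcoeff.2)⟩
end

section
/- Let R be a commutative ring in which 2 = 0, equipped with a derivation D : R → R, and let y² = x³ + a₄x + a₆ be a Weierstraß equation in short form over R, with quasi-discriminant Ψ = a₄·(D a₄)² + (D a₆)². For any variable change (u, r, s, t) with r = s², the quasi-discriminant Ψ' = a₄'·(D a₄')² + (D a₆')² of the transformed short-form equation satisfies u¹²·Ψ' = Ψ. -/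
/-- Over a commutative ring `R` with `2 = 0` equipped with a derivation `D : R → R`, any
change of variables `(u, r, s, t)` with `r = s²` (hence preserving the short Weierstraß form
`y² = x³ + a₄x + a₆`) transforms the quasi-discriminant `Ψ = a₄·(D a₄)² + (D a₆)²` according
to `u¹²·Ψ' = Ψ`. -/
theorem stmt3 {R : Type*} [CommRing R] (h2 : (2 : R) = 0) (D : Derivation ℤ R R)
    (a₄ a₆ : R) (C : WeierstrassCurve.VariableChange R) (hr : C.r = C.s ^ 2) :
    letI W : WeierstrassCurve R := { a₁ := 0, a₂ := 0, a₃ := 0, a₄ := a₄, a₆ := a₆ }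
    letI W' := C • W
    (C.u : R) ^ 12 * (W'.a₄ * (D W'.a₄) ^ 2 + (D W'.a₆) ^ 2) =
      a₄ * (D a₄) ^ 2 + (D a₆) ^ 2 := by
  set W : WeierstrassCurve R := { a₁ := 0, a₂ := 0, a₃ := 0, a₄ := a₄, a₆ := a₆ } with hW
  set W' := C • W with hW'
  set u : R := (C.u : R)
  set v : R := ((C.u⁻¹ : Rˣ) : R) with hv
  have huv : u * v = 1 := by rw [hv]; exact_mod_cast C.u.mul_inv
  have hsq : ∀ c : R, D (c ^ 2) = 0 := by
    intro c
    rw [pow_two, Derivation.leibniz]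
    simp only [smul_eq_mul]
    linear_combination (c * D c) * h2
  have ha4 : W'.a₄ = v ^ 4 * (a₄ + C.s ^ 4) := by
    show v ^ 4 * _ = _
    simp only [hr]
    linear_combination (v ^ 4 * (C.s ^ 4 - C.s * C.t)) * h2
  have ha6 : W'.a₆ = v ^ 6 * (a₆ + C.t ^ 2 + C.s ^ 2 * (C.s ^ 4 + a₄)) := by
    show v ^ 6 * _ = _
    simp only [hr]
    linear_combination (-v ^ 6 * C.t ^ 2) * h2
  have hmul : ∀ c x : R, D (c ^ 2 * x) = c ^ 2 * D x := by
    intro c x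
    rw [Derivation.leibniz, hsq, smul_zero, smul_eq_mul, add_zero]
  have hd4 : D W'.a₄ = v ^ 4 * D a₄ := by
    rw [ha4, show v ^ 4 = (v ^ 2) ^ 2 by ring, hmul, map_add,
      show C.s ^ 4 = (C.s ^ 2) ^ 2 by ring, hsq, add_zero]
  have hs2 : D (C.s ^ 2) = 0 := hsq _
  have hs4 : D (C.s ^ 4) = 0 := by
    rw [show C.s ^ 4 = (C.s ^ 2) ^ 2 by ring]; exact hsq _
  have hd6 : D W'.a₆ = v ^ 6 * (D a₆ + C.s ^ 2 * D a₄) := by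
    rw [ha6, show v ^ 6 = (v ^ 3) ^ 2 by ring, hmul]
    simp only [map_add, hs4, hsq, add_zero, Derivation.leibniz, hs2, smul_zero,
      smul_eq_mul, zero_add]
    ring
  rw [hd4, hd6, ha4]
  have h12 : u ^ 12 * v ^ 12 = 1 := by rw [← mul_pow, huv, one_pow]
  linear_combination ((a₄ + C.s ^ 4) * (D a₄) ^ 2 + (D a₆ + C.s ^ 2 * D a₄) ^ 2) * h12 +
    (C.s ^ 4 * (D a₄) ^ 2 + C.s ^ 2 * D a₄ * D a₆) * h2
end

section
/- Let k be a field of characteristic 2, and let a₄ = Σ_{i=0}^{8} λᵢtⁱ and a₆ = Σ_{j=0}^{12} μⱼt^j be polynomials in k[t] such that λᵢ = 0 whenever 4 divides i, and μⱼ = 0 whenever j is even. Suppose that the quasi-discriminant Ψ = a₄·(a₄')² + (a₆')² (where ' denotes the formal derivative d/dt) equals ε·(t¹² + t⁸) for some ε ∈ k with ε ≠ 0. Then λᵢ = 0 for all i ∉ {2, 6}, μⱼ = 0 for all j ∉ {5, 7}, μ₅ = μ₇, and μ₅² = ε; that is, a₄ = λ₂t² + λ₆t⁶ and a₆ = μ·(t⁵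 + t⁷) with μ² = ε. -/
open Polynomial

set_option maxHeartbeats 4000000 in
/-- Let `k` be a field of characteristic `2`, and let `a₄ = Σ_{i<9} λᵢ tⁱ`,
`a₆ = Σ_{j<13} μⱼ t^j` in `k[t]` with `λᵢ = 0` for `4 ∣ i` and `μⱼ = 0` for even `j`.
If the quasi-discriminant `Ψ = a₄·(a₄')² + (a₆')²` equals `ε·(t¹² + t⁸)` with `ε ≠ 0`, then
`a₄ = λ₂t² + λ₆t⁶` and `a₆ = μ·(t⁵ + t⁷)` with `μ = μ₅ = μ₇` and `μ² = ε`. -/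
theorem stmt6 {k : Type*} [Field k] [CharP k 2] (l m : ℕ → k)
    (hl : ∀ i, 4 ∣ i → l i = 0) (hm : ∀ j, Even j → m j = 0)
    (ε : k) (hε : ε ≠ 0) (a₄ a₆ : Polynomial k)
    (ha₄ : a₄ = ∑ i ∈ Finset.range 9, C (l i) * X ^ i)
    (ha₆ : a₆ = ∑ j ∈ Finset.range 13, C (m j) * X ^ j)
    (hΨ : a₄ * (derivative a₄) ^ 2 + (derivative a₆) ^ 2
        = C ε * (X ^ 12 + X ^ 8)) :
    (∀ i < 9, i ≠ 2 → i ≠ 6 → l i = 0) ∧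
    (∀ j < 13, j ≠ 5 → j ≠ 7 → m j = 0) ∧
    m 5 = m 7 ∧ m 5 ^ 2 = ε := by
  subst ha₄ ha₆
  simp only [Finset.sum_range_succ, Finset.sum_range_zero, hl 0 ⟨0, rfl⟩, hl 4 ⟨1, rfl⟩,
    hl 8 ⟨2, rfl⟩, hm 0 ⟨0, rfl⟩, hm 2 ⟨1, rfl⟩, hm 4 ⟨2, rfl⟩, hm 6 ⟨3, rfl⟩,
    hm 8 ⟨4, rfl⟩, hm 10 ⟨5, rfl⟩, hm 12 ⟨6, rfl⟩, map_zero, zero_mul, zero_add, add_zero] at hΨ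
  simp only [derivative_add, derivative_C_mul, derivative_X_pow] at hΨ
  norm_num at hΨ
  have h2 : (2:k) = 0 := CharTwo.two_eq_zero
  have h3 : (3:k) = 1 := by linear_combination h2
  have h5 : (5:k) = 1 := by linear_combination (2:k) * h2
  have h6 : (6:k) = 0 := by linear_combination (3:k) * h2
  have h7 : (7:k) = 1 := by linear_combination (3:k) * h2
  have h9 : (9:k) = 1 := by linear_combination (4:k) * h2
  have h11 : (11:k) = 1 := by linear_combination (5:k) * h2
  simp only [h2, h3, h5, h6, h7, h9, h11, map_zero, map_one, zero_mul, one_mul, mul_zero,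
    add_zero, zero_add] at hΨ
  ring_nf at hΨ
  have p2 : (2 : Polynomial k) = 0 := CharTwo.two_eq_zero
  have p3 : (3 : Polynomial k) = 1 := by linear_combination p2
  have p6 : (6 : Polynomial k) = 0 := by linear_combination (3 : Polynomial k) * p2
  simp only [p2, p3, p6, mul_zero, mul_one, zero_mul, one_mul, add_zero, zero_add,
    ← C_pow, ← C_mul] at hΨ
  have e0 := congrArg (fun p : Polynomial k => p.coeff 0) hΨ
  simp only [coeff_add, coeff_C_mul, coeff_mul_C, coeff_X_pow, coeff_X, coeff_C] at e0
  norm_num at e0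
  have e1 := congrArg (fun p : Polynomial k => p.coeff 1) hΨ
  simp only [coeff_add, coeff_C_mul, coeff_mul_C, coeff_X_pow, coeff_X, coeff_C] at e1
  norm_num at e1
  have e4 := congrArg (fun p : Polynomial k => p.coeff 4) hΨ
  simp only [coeff_add, coeff_C_mul, coeff_mul_C, coeff_X_pow, coeff_X, coeff_C] at e4
  norm_num at e4
  have e7 := congrArg (fun p : Polynomial k => p.coeff 7) hΨ
  simp only [coeff_add, coeff_C_mul, coeff_mul_C, coeff_X_pow, coeff_X, coeff_C] at e7
  norm_num at e7
  have e8 := congrArg (fun p : Polynomial k => p.coeff 8) hΨ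
  simp only [coeff_add, coeff_C_mul, coeff_mul_C, coeff_X_pow, coeff_X, coeff_C] at e8
  norm_num at e8
  have e12 := congrArg (fun p : Polynomial k => p.coeff 12) hΨ
  simp only [coeff_add, coeff_C_mul, coeff_mul_C, coeff_X_pow, coeff_X, coeff_C] at e12
  norm_num at e12
  have e13 := congrArg (fun p : Polynomial k => p.coeff 13) hΨ
  simp only [coeff_add, coeff_C_mul, coeff_mul_C, coeff_X_pow, coeff_X, coeff_C] at e13
  norm_num at e13
  have e16 := congrArg (fun p : Polynomial k => p.coeff 16) hΨ
  simp only [coeff_add, coeff_C_mul, coeff_mul_C, coeff_X_pow, coeff_X, coeff_C] at e16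
  norm_num at e16
  have e19 := congrArg (fun p : Polynomial k => p.coeff 19) hΨ
  simp only [coeff_add, coeff_C_mul, coeff_mul_C, coeff_X_pow, coeff_X, coeff_C] at e19
  norm_num at e19
  have e20 := congrArg (fun p : Polynomial k => p.coeff 20) hΨ
  simp only [coeff_add, coeff_C_mul, coeff_mul_C, coeff_X_pow, coeff_X, coeff_C] at e20
  norm_num at e20
  -- e0 : m 1 = 0, e1 : l 1 = 0, e4 : m 3 = 0, e7 : l 1 ^ 2 * l 7 + l 3 ^ 3 = 0,
  -- e8 : m 5 ^ 2 = ε, e12 : m 7 ^ 2 = ε, e13 : l 1 * l 7 ^ 2 + l 5 ^ 3 = 0,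
  -- e16 : m 9 = 0, e19 : l 7 = 0, e20 : m 11 = 0
  have hl3 : l 3 = 0 := by
    rw [e1] at e7; norm_num at e7; exact e7
  have hl5 : l 5 = 0 := by
    rw [e1] at e13; norm_num at e13; exact e13
  have h57 : m 5 = m 7 := by
    have hsq : (m 5 - m 7) ^ 2 = 0 := by
      linear_combination e8 + e12 + (ε - m 5 * m 7) * h2
    exact sub_eq_zero.mp (pow_eq_zero_iff two_ne_zero |>.mp hsq)
  refine ⟨?_, ?_, h57, e8⟩
  · intro i hi hi2 hi6
    interval_cases i
    · exact hl 0 ⟨0, rfl⟩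
    · exact e1
    · exact absurd rfl hi2
    · exact hl3
    · exact hl 4 ⟨1, rfl⟩
    · exact hl5
    · exact absurd rfl hi6
    · exact e19
    · exact hl 8 ⟨2, rfl⟩
  · intro j hj hj5 hj7
    interval_cases j
    · exact hm 0 ⟨0, rfl⟩
    · exact e0
    · exact hm 2 ⟨1, rfl⟩
    · exact e4
    · exact hm 4 ⟨2, rfl⟩
    · exact absurd rfl hj5
    · exact hm 6 ⟨3, rfl⟩
    · exact absurd rfl hj7
    · exact hm 8 ⟨4, rfl⟩
    · exact e16
    · exact hm 10 ⟨5, rfl⟩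
    · exact e20
    · exact hm 12 ⟨6, rfl⟩
end

section
/- Let ℓ be a prime number, let N be a group that is cyclic of order ℓ (e.g., N = Multiplicative (ZMod ℓ)), and let H = N ⋊ Aut(N) be the holomorph of N, i.e., the semidirect product of N with its automorphism group Aut(N) acting naturally. Then a subgroup K of H is a normal subgroup different from the trivial subgroup {e} if and only if K is the preimage under the canonical projection H → Aut(N) of some subgroup A' of Aut(N), i.e., K = N ⋊ A' = {(n, a) : n ∈ N, a ∈ A'} for some subgroup A' ≤ Aut(N). -/
open SemidirectProduct

lemma mulAut_comm_of_isCyclic {G : Type*} [Group G] [IsCyclic G] (a b : MulAut G) :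
    a * b = b * a := by
  obtain ⟨g, hg⟩ := IsCyclic.exists_generator (α := G)
  ext x
  obtain ⟨k, rfl⟩ := hg x
  obtain ⟨m, hm⟩ := hg (a g)
  obtain ⟨n, hn⟩ := hg (b g)
  have hm' : g ^ m = a g := hm
  have hn' : g ^ n = b g := hn
  have h1 : ∀ (c d : MulAut G) (p q : ℤ), g ^ p = c g → g ^ q = d g →
      c (d (g ^ k)) = g ^ (p * q * k) := by
    intro c d p q hp hq
    rw [map_zpow, ← hq, map_zpow, map_zpow, ← hp, ← zpow_mul, ← zpow_mul, mul_assoc]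
  show a (b (g ^ k)) = b (a (g ^ k))
  rw [h1 a b m n hm' hn', h1 b a n m hn' hm', mul_comm m n]

/-- Let `ℓ` be a prime and `N` a cyclic group of order `ℓ`. In the holomorph
`H = N ⋊ Aut(N)` (semidirect product along the identity `Aut(N) → Aut(N)`), a subgroup `K`
is a normal subgroup different from the trivial subgroup if and only if it is the preimage
under the canonical projection `H → Aut(N)` of some subgroup `A'` of `Aut(N)`. -/
theorem stmt8 {ℓ : ℕ} (hℓ : ℓ.Prime) (N : Type*) [Group N] [IsCyclic N]
    (hcard : Nat.card N = ℓ)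
    (K : Subgroup (N ⋊[MonoidHom.id (MulAut N)] (MulAut N))) :
    (K.Normal ∧ K ≠ ⊥) ↔
      ∃ A' : Subgroup (MulAut N),
        K = Subgroup.comap (SemidirectProduct.rightHom :
          (N ⋊[MonoidHom.id (MulAut N)] (MulAut N)) →* MulAut N) A' := by
  have hpf : Fact ℓ.Prime := ⟨hℓ⟩
  have hcomm : ∀ x y : N, x * y = y * x := fun x y =>
    (IsCyclic.commGroup (α := N)).mul_comm x y
  constructor
  · rintro ⟨hnorm, hne⟩
    refine ⟨Subgroup.map (rightHom : (N ⋊[MonoidHom.id (MulAut N)] (MulAut N)) →* MulAut N) K, ?_⟩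
    -- It suffices to show ker rightHom ≤ K
    have hker : (rightHom : (N ⋊[MonoidHom.id (MulAut N)] (MulAut N)) →* MulAut N).ker ≤ K := by
      rw [← range_inl_eq_ker_rightHom]
      -- First find a nontrivial element of N whose inl lies in K
      have key : ∃ n : N, n ≠ 1 ∧ (inl n : N ⋊[MonoidHom.id (MulAut N)] (MulAut N)) ∈ K := by
        obtain ⟨x, hxK, hx1⟩ := (Subgroup.nontrivial_iff_exists_ne_one K).mp
          ((Subgroup.nontrivial_iff_ne_bot K).mpr hne)
        obtain ⟨n, a⟩ := x
        by_cases ha : a = 1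
        · subst ha
          refine ⟨n, ?_, ?_⟩
          · intro h; exact hx1 (by ext <;> simp [h])
          · have : (inl n : N ⋊[MonoidHom.id (MulAut N)] (MulAut N)) = ⟨n, 1⟩ := rfl
            rw [this]; exact hxK
        · -- find m with a m ≠ m
          have : ∃ m : N, a m ≠ m := by
            by_contra h
            push_neg at h
            exact ha (by ext m; simp [h m])
          obtain ⟨m, hm⟩ := this
          refine ⟨m * (a m)⁻¹, fun h => hm (by
            have := mul_inv_eq_one.mp h
            exact this.symm), ?_⟩
          have hc : (inl m : N ⋊[MonoidHom.id (MulAut N)] (MulAut N)) * ⟨n, a⟩ *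
              (inl m)⁻¹ * (⟨n, a⟩ : N ⋊[MonoidHom.id (MulAut N)] (MulAut N))⁻¹ =
              inl (m * (a m)⁻¹) := by
            ext
            · simp only [mul_left, mul_right, inv_left, inv_right, left_inl, right_inl,
                MonoidHom.id_apply, inv_one, MulAut.one_apply, one_mul, mul_one, map_inv,
                map_mul]
              rw [MulAut.apply_inv_self, mul_assoc m n, hcomm n (a m)⁻¹, ← mul_assoc m,
                mul_assoc (m * (a m)⁻¹), mul_inv_cancel, mul_one]
            · simp
          have h1 : (inl m : N ⋊[MonoidHom.id (MulAut N)] (MulAut N)) * ⟨n, a⟩ *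
              (inl m)⁻¹ ∈ K := hnorm.conj_mem _ hxK _
          have h2 := K.mul_mem h1 (K.inv_mem hxK)
          rwa [hc] at h2
      obtain ⟨n, hn1, hnK⟩ := key
      rintro x ⟨y, rfl⟩
      have hy : y ∈ Subgroup.zpowers n := by
        rw [zpowers_eq_top_of_prime_card hcard hn1]
        trivial
      obtain ⟨k, rfl⟩ := hy
      rw [map_zpow]
      exact K.zpow_mem hnK k
    rw [Subgroup.comap_map_eq, sup_eq_left.mpr hker]
  · rintro ⟨A', rfl⟩
    constructor
    · constructor
      intro x hx g
      rw [Subgroup.mem_comap] at hx ⊢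
      rw [map_mul, map_mul, map_inv]
      rw [mulAut_comm_of_isCyclic (rightHom g) (rightHom x), mul_assoc,
        mul_inv_cancel, mul_one]
      exact hx
    · have : Nontrivial N := by
        have hf : Finite N := Nat.finite_of_card_ne_zero (by rw [hcard]; exact hℓ.pos.ne')
        have : 1 < Nat.card N := hcard ▸ hℓ.one_lt
        exact Finite.one_lt_card_iff_nontrivial.mp this
      obtain ⟨n, hn⟩ := exists_ne (1 : N)
      rw [Subgroup.ne_bot_iff_exists_ne_one]
      refine ⟨⟨inl n, ?_⟩, ?_⟩
      · rw [Subgroup.mem_comap, rightHom_inl]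
        exact A'.one_mem
      · intro h
        rw [Subtype.ext_iff] at h
        exact hn (inl_injective (by simpa using h))
end

section
/- Let H₁ and H₂ be simple groups, let φ : H₂ → Aut(H₁) be an action, and let H = H₁ ⋊_φ H₂ be the corresponding semidirect product. Assume H is not isomorphic (as a group) to the direct product H₁ × H₂. Then every normal subgroup N of H satisfies N = {e}, or N = H, or N equals the canonical image of H₁ in H (the range of the inclusion H₁ → H, n ↦ (n, e)). In particular the image of H₁ is the only normal subgroup of H different from {e} and H. -/
/-- Let `H₁`, `H₂` be simple groups and `H = H₁ ⋊_φ H₂` a semidirect product which is not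
isomorphic to the direct product `H₁ × H₂`. Then every normal subgroup of `H` is trivial, all
of `H`, or the canonical image of `H₁`. -/
theorem stmt9 {H₁ H₂ : Type*} [Group H₁] [Group H₂]
    [IsSimpleGroup H₁] [IsSimpleGroup H₂] (φ : H₂ →* MulAut H₁)
    (h : IsEmpty ((H₁ ⋊[φ] H₂) ≃* (H₁ × H₂)))
    (N : Subgroup (H₁ ⋊[φ] H₂)) (hN : N.Normal) :
    N = ⊥ ∨ N = ⊤ ∨
      N = (SemidirectProduct.inl : H₁ →* (H₁ ⋊[φ] H₂)).range := by
  set A : Subgroup (H₁ ⋊[φ] H₂) := (SemidirectProduct.inl : H₁ →* (H₁ ⋊[φ] H₂)).range with hA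
  have hAker : A = (SemidirectProduct.rightHom : (H₁ ⋊[φ] H₂) →* H₂).ker :=
    SemidirectProduct.range_inl_eq_ker_rightHom
  -- the preimage of N ⊓ A in H₁ is normal
  have hSnormal : ((N ⊓ A).comap (SemidirectProduct.inl : H₁ →* (H₁ ⋊[φ] H₂))).Normal := by
    constructor
    intro s hs g
    simp only [Subgroup.mem_comap, Subgroup.mem_inf, map_mul, map_inv] at hs ⊢
    exact ⟨hN.conj_mem _ hs.1 _, ⟨g * s * g⁻¹, by simp⟩⟩
  rcases hSnormal.eq_bot_or_eq_top with hS | hS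
  · -- N ⊓ A = ⊥
    have hdis : Disjoint N A := by
      rw [disjoint_iff, eq_bot_iff]
      rintro x ⟨hxN, a, rfl⟩
      have : a ∈ ((N ⊓ A).comap (SemidirectProduct.inl : H₁ →* (H₁ ⋊[φ] H₂))) :=
        ⟨hxN, ⟨a, rfl⟩⟩
      rw [hS] at this
      have ha : a = 1 := by simpa using this
      simp [ha]
    have hAnorm : A.Normal := hAker ▸ (SemidirectProduct.rightHom).normal_ker
    -- look at the image of N in H₂
    have hMnorm : (N.map (SemidirectProduct.rightHom : (H₁ ⋊[φ] H₂) →* H₂)).Normal :=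
      hN.map _ SemidirectProduct.rightHom_surjective
    rcases hMnorm.eq_bot_or_eq_top with hM | hM
    · -- N ≤ ker rightHom = A, so N = N ⊓ A = ⊥
      left
      have hle : N ≤ A := by
        rw [hAker]
        intro x hx
        have : SemidirectProduct.rightHom x ∈ N.map SemidirectProduct.rightHom :=
          ⟨x, hx, rfl⟩
        rw [hM] at this
        simpa [MonoidHom.mem_ker] using this
      rw [eq_bot_iff]
      intro x hx
      exact hdis.le_bot ⟨hx, hle hx⟩
    · -- build an iso with H₁ × H₂, contradiction
      exfalso
      set f : N →* H₂ := (SemidirectProduct.rightHom).comp N.subtype with hf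
      have hfinj : Function.Injective f := by
        rw [← MonoidHom.ker_eq_bot_iff, eq_bot_iff]
        rintro ⟨x, hx⟩ hker
        have hxA : x ∈ A := by
          rw [hAker]
          simpa [hf, MonoidHom.mem_ker] using hker
        have : x ∈ (⊥ : Subgroup (H₁ ⋊[φ] H₂)) := hdis.le_bot ⟨hx, hxA⟩
        simpa [Subgroup.mem_bot] using this
      have hfsurj : Function.Surjective f := by
        intro y
        have : y ∈ N.map (SemidirectProduct.rightHom : (H₁ ⋊[φ] H₂) →* H₂) := by
          rw [hM]; trivial
        rcases this with ⟨x, hx, rfl⟩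
        exact ⟨⟨x, hx⟩, rfl⟩
      set e : N ≃* H₂ := MulEquiv.ofBijective f ⟨hfinj, hfsurj⟩ with he
      set s : H₂ →* (H₁ ⋊[φ] H₂) := N.subtype.comp e.symm.toMonoidHom with hs
      have hsN : ∀ y : H₂, s y ∈ N := fun y => (e.symm y).2
      have hrs : ∀ y : H₂, SemidirectProduct.rightHom (s y) = y := fun y =>
        e.apply_symm_apply y
      have hcomm : ∀ (a : H₁) (y : H₂), Commute (SemidirectProduct.inl a) (s y) :=
        fun a y => Subgroup.commute_of_normal_of_disjoint A N hAnorm hN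
          (disjoint_comm.mp hdis) _ _ ⟨a, rfl⟩ (hsN y)
      set g : H₁ × H₂ →* (H₁ ⋊[φ] H₂) :=
        { toFun := fun p => SemidirectProduct.inl p.1 * s p.2
          map_one' := by simp
          map_mul' := by
            rintro ⟨a₁, y₁⟩ ⟨a₂, y₂⟩
            simp only [Prod.fst_mul, Prod.snd_mul, map_mul]
            rw [mul_assoc, ← mul_assoc (SemidirectProduct.inl a₂), (hcomm a₂ y₁).eq]
            group } with hg
      have hginj : Function.Injective g := by
        rw [← MonoidHom.ker_eq_bot_iff, eq_bot_iff]
        rintro ⟨a, y⟩ hker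
        simp only [MonoidHom.mem_ker, hg, MonoidHom.coe_mk, OneHom.coe_mk] at hker
        have hy : y = 1 := by
          have h2 := congrArg SemidirectProduct.rightHom hker
          rwa [map_mul, SemidirectProduct.rightHom_inl, one_mul, hrs, map_one] at h2
        subst hy
        simp only [map_one, mul_one] at hker
        have ha : a = 1 := SemidirectProduct.inl_injective (by simpa using hker)
        simp [ha, Subgroup.mem_bot, Prod.ext_iff]
      have hgsurj : Function.Surjective g := by
        intro x
        have hker : x * (s (SemidirectProduct.rightHom x))⁻¹ ∈ A := by
          rw [hAker, MonoidHom.mem_ker, map_mul, map_inv, hrs, mul_inv_cancel]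
        rcases hker with ⟨a, ha⟩
        refine ⟨(a, SemidirectProduct.rightHom x), ?_⟩
        simp only [hg, MonoidHom.coe_mk, OneHom.coe_mk, ha]
        group
      exact h.false ((MulEquiv.ofBijective g ⟨hginj, hgsurj⟩).symm)
  · -- A ≤ N
    have hAN : A ≤ N := by
      rintro x ⟨a, rfl⟩
      have : a ∈ ((N ⊓ A).comap (SemidirectProduct.inl : H₁ →* (H₁ ⋊[φ] H₂))) := by
        rw [hS]; trivial
      exact this.1
    have hMnorm : (N.map (SemidirectProduct.rightHom : (H₁ ⋊[φ] H₂) →* H₂)).Normal :=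
      hN.map _ SemidirectProduct.rightHom_surjective
    rcases hMnorm.eq_bot_or_eq_top with hM | hM
    · -- N ≤ A, so N = A
      right; right
      refine le_antisymm ?_ hAN
      intro x hx
      rw [hAker]
      have : SemidirectProduct.rightHom x ∈ N.map SemidirectProduct.rightHom := ⟨x, hx, rfl⟩
      rw [hM] at this
      simpa [MonoidHom.mem_ker] using this
    · -- N = ⊤
      right; left
      rw [eq_top_iff]
      intro x _
      have : SemidirectProduct.rightHom x ∈ N.map SemidirectProduct.rightHom := by
        rw [hM]; trivial
      rcases this with ⟨y, hy, hxy⟩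
      have hker : x * y⁻¹ ∈ A := by
        rw [hAker, MonoidHom.mem_ker, map_mul, map_inv, hxy, mul_inv_cancel]
      have : x * y⁻¹ ∈ N := hAN hker
      have := N.mul_mem this hy
      simpa using this
end

section
/- Let p be a prime, s ≥ 1 an integer, q = p^s, and let K be a field of characteristic p. Consider the polynomial f(a, b, c) = (a^q − a)² + (b^q − b)(c^q − c) in three variables over K. Then for every point (a, b, c) ∈ K³, the value f(a, b, c) and the values at (a, b, c) of all three partial derivatives ∂f/∂a, ∂f/∂b, ∂f/∂c vanish simultaneously if and only if a^q = a, b^q = b, and c^q = c (i.e., the singular points of the hypersurface f = 0 are exactly the points with all coordinates in the subfield F_q). -/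
open MvPolynomial

namespace Stmt12

/-- The polynomial `f(a, b, c) = (a^q − a)² + (b^q − b)(c^q − c)` in three variables. -/
noncomputable def f (K : Type*) [CommRing K] (q : ℕ) : MvPolynomial (Fin 3) K :=
  (X 0 ^ q - X 0) ^ 2 + (X 1 ^ q - X 1) * (X 2 ^ q - X 2)

/-- Let `p` be a prime, `s ≥ 1`, `q = p^s`, and `K` a field of characteristic `p`. A point
`(a, b, c) ∈ K³` is a common zero of `f` and its three partial derivatives if and only if
`a^q = a`, `b^q = b` and `c^q = c`. -/
theorem stmt12 {p : ℕ} (hp : p.Prime) (s : ℕ) (hs : 1 ≤ s)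
    (K : Type*) [Field K] [CharP K p] (a b c : K) :
    (eval ![a, b, c] (f K (p ^ s)) = 0 ∧
      ∀ i : Fin 3, eval ![a, b, c] (pderiv i (f K (p ^ s))) = 0) ↔
    (a ^ p ^ s = a ∧ b ^ p ^ s = b ∧ c ^ p ^ s = c) := by
  have hq : ((p ^ s : ℕ) : K) = 0 := by
    rw [Nat.cast_pow, CharP.cast_eq_zero K p, zero_pow (by omega)]
  have hev : ∀ i : Fin 3, eval ![a, b, c] (pderiv i (f K (p ^ s))) =
      ![-(2 * (a ^ p ^ s - a)), -(c ^ p ^ s - c), -(b ^ p ^ s - b)] i := by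
    intro i
    fin_cases i <;>
      simp [f, pderiv_pow, hq, Nat.cast_pow, CharP.cast_eq_zero K p,
        zero_pow (by omega : s ≠ 0), Fin.isValue, Pi.single_apply] <;> ring
  constructor
  · rintro ⟨h0, h⟩
    have h1 := h 1; have h2 := h 2
    rw [hev 1] at h1; rw [hev 2] at h2
    simp at h1 h2
    have hb : b ^ p ^ s = b := by linear_combination -h2
    have hc : c ^ p ^ s = c := by linear_combination -h1
    simp only [f, map_add, map_mul, map_pow, map_sub, eval_X] at h0
    simp only [Matrix.cons_val_zero, Matrix.cons_val_one, Matrix.head_cons,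
      Matrix.cons_val_two, Matrix.tail_cons] at h0
    have : (a ^ p ^ s - a) ^ 2 = 0 := by
      rw [hb, hc] at h0; linear_combination h0
    have := pow_eq_zero_iff (n := 2) (by norm_num) |>.mp this
    exact ⟨by linear_combination this, hb, hc⟩
  · rintro ⟨ha, hb, hc⟩
    refine ⟨?_, ?_⟩
    · simp only [f, map_add, map_mul, map_pow, map_sub, eval_X]
      simp only [Matrix.cons_val_zero, Matrix.cons_val_one, Matrix.head_cons,
        Matrix.cons_val_two, Matrix.tail_cons]
      rw [ha, hb, hc]; ring
    · intro i
      rw [hev i]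
      fin_cases i <;> simp [ha, hb, hc]

end Stmt12
end

section
/- Type A₂ canonical divisor coefficients: work in ℚ² with coordinates taken with respect to the simple roots α₁, α₂ of the root system A₂, so that the simple reflections act by s₁(x, y) = (y − x, y) and s₂(x, y) = (x, x − y), the half-sum of positive roots is ρ = (1, 1), and the pairings with the simple coroots are ⟨(x, y), α₁^∨⟩ = 2x − y and ⟨(x, y), α₁^∨ + α₂^∨⟩ = x + y. Let q ∈ ℚ. Then there is a unique μ = (x, y) ∈ ℚ² with q·s₂(s₁(μ)) − μ = (1 − q)·ρ, and it satisfies (2x − y) − 1 = (q² − 2q − 2)/(q² + q + 1) and (x + y) − 1 = −3/(q² + q + 1). Moreover, for an integer q ≥ 2, both of these quantities are ≤ 0 if and only if q = 2. -/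
/-!
The equation `q·s₂(s₁ μ) − μ = (1 − q)·ρ` is a 2×2 linear system in the coordinates of `μ` with
determinant `q² + q + 1 > 0`, so Cramer's rule gives the unique solution
`μ = ((q² − 1), (q − 1)) / (q² + q + 1)`, from which both pairings are read off. For integers
`q ≥ 2` the second coefficient is always negative, and the first has the sign of `q² − 2q − 2`,
which is negative at `q = 2` and positive from `q = 3` on.
-/

namespace Stmt13

/-- The simple reflection `s₁` of type `A₂` in coordinates w.r.t. the simple roots. -/
def s₁ (v : ℚ × ℚ) : ℚ × ℚ := (v.2 - v.1, v.2)

/-- The simple reflection `s₂` of type `A₂` in coordinates w.r.t. the simple roots. -/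
def s₂ (v : ℚ × ℚ) : ℚ × ℚ := (v.1, v.1 - v.2)

/-- The half-sum of positive roots `ρ = α₁ + α₂`. -/
def ρ : ℚ × ℚ := (1, 1)

lemma sq_add_self_add_one_pos {K : Type*} [CommRing K] [LinearOrder K] [IsStrictOrderedRing K]
    (q : K) : 0 < q ^ 2 + q + 1 := by
  nlinarith [sq_nonneg (2 * q + 1)]

def canonicalWeight (q : ℚ) : ℚ × ℚ :=
  ((q ^ 2 - 1) / (q ^ 2 + q + 1), (q - 1) / (q ^ 2 + q + 1))

lemma smul_s₂_s₁_sub_eq_iff (q : ℚ) (μ : ℚ × ℚ) :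
    q • s₂ (s₁ μ) - μ = (1 - q) • ρ ↔
      q * (μ.2 - μ.1) - μ.1 = 1 - q ∧ q * (-μ.1) - μ.2 = 1 - q := by
  simp only [s₁, s₂, ρ, Prod.ext_iff, Prod.smul_mk, smul_eq_mul, Prod.fst_sub, Prod.snd_sub]
  constructor <;> rintro ⟨h1, h2⟩ <;>
    exact ⟨by linear_combination h1, by linear_combination h2⟩

lemma smul_s₂_s₁_sub_eq_iff_eq_canonicalWeight (q : ℚ) (μ : ℚ × ℚ) :
    q • s₂ (s₁ μ) - μ = (1 - q) • ρ ↔ μ = canonicalWeight q := by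
  have hD : q ^ 2 + q + 1 ≠ 0 := (sq_add_self_add_one_pos q).ne'
  rw [smul_s₂_s₁_sub_eq_iff]
  constructor
  · rintro ⟨h1, h2⟩
    ext
    · rw [canonicalWeight, eq_div_iff hD]
      linear_combination -h1 - q * h2
    · rw [canonicalWeight, eq_div_iff hD]
      linear_combination q * h1 - (q + 1) * h2
  · rintro rfl
    simp only [canonicalWeight, div_eq_mul_inv]
    constructor <;> linear_combination (1 - q) * mul_inv_cancel₀ hD

lemma canonicalWeight_coeffs (q : ℚ) :
    (2 * (canonicalWeight q).1 - (canonicalWeight q).2) - 1 =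
        (q ^ 2 - 2 * q - 2) / (q ^ 2 + q + 1) ∧
      ((canonicalWeight q).1 + (canonicalWeight q).2) - 1 = -3 / (q ^ 2 + q + 1) := by
  have hD : q ^ 2 + q + 1 ≠ 0 := (sq_add_self_add_one_pos q).ne'
  simp only [canonicalWeight, div_eq_mul_inv]
  constructor <;> linear_combination mul_inv_cancel₀ hD

lemma sq_sub_two_mul_sub_two_nonpos_iff {q : ℤ} (hq : 2 ≤ q) :
    q ^ 2 - 2 * q - 2 ≤ 0 ↔ q = 2 := by
  constructor
  · intro h
    nlinarith
  · rintro rfl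
    norm_num

/-- Type `A₂` canonical divisor coefficients: for every `q` there is a unique `μ` with
`q·s₂(s₁(μ)) − μ = (1 − q)·ρ`; it satisfies `⟨μ, α₁^∨⟩ − 1 = (q² − 2q − 2)/(q² + q + 1)` and
`⟨μ, α₁^∨ + α₂^∨⟩ − 1 = −3/(q² + q + 1)`; and for an integer `q ≥ 2` both quantities are
`≤ 0` iff `q = 2`. -/
theorem stmt13 :
    (∀ q : ℚ,
      (∃! μ : ℚ × ℚ, q • s₂ (s₁ μ) - μ = (1 - q) • ρ) ∧
      ∀ μ : ℚ × ℚ, q • s₂ (s₁ μ) - μ = (1 - q) • ρ →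
        (2 * μ.1 - μ.2) - 1 = (q ^ 2 - 2 * q - 2) / (q ^ 2 + q + 1) ∧
        (μ.1 + μ.2) - 1 = -3 / (q ^ 2 + q + 1)) ∧
    (∀ q : ℤ, 2 ≤ q →
      ((((q : ℚ) ^ 2 - 2 * q - 2) / ((q : ℚ) ^ 2 + q + 1) ≤ 0 ∧
        (-3 : ℚ) / ((q : ℚ) ^ 2 + q + 1) ≤ 0) ↔ q = 2)) := by
  refine ⟨fun q => ⟨?_, fun μ hμ => ?_⟩, fun q hq => ?_⟩
  · simpa only [smul_s₂_s₁_sub_eq_iff_eq_canonicalWeight] using existsUnique_eq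
  · rw [(smul_s₂_s₁_sub_eq_iff_eq_canonicalWeight q μ).mp hμ]
    exact canonicalWeight_coeffs q
  · have hD := sq_add_self_add_one_pos (q : ℚ)
    have hneg : (-3 : ℚ) / ((q : ℚ) ^ 2 + q + 1) ≤ 0 :=
      div_nonpos_of_nonpos_of_nonneg (by norm_num) hD.le
    rw [and_iff_left hneg, div_le_iff₀ hD, zero_mul, ← sq_sub_two_mul_sub_two_nonpos_iff hq]
    exact_mod_cast Iff.rfl

end Stmt13
end

section
/- Type ²A₂ canonical divisor coefficients: work in ℚ² with coordinates taken with respect to the simple roots α₁, α₂ of the root system A₂, so that s₁(x, y) = (y − x, y), s₂(x, y) = (x, x − y), ρ = (1, 1), ⟨(x, y), α₁^∨⟩ = 2x − y, ⟨(x, y), α₁^∨ + α₂^∨⟩ = x + y, and let φ(x, y) = (q·y, q·x) for a rational number q with q ≠ 1 and q ≠ −1. Then there is a unique μ = (x, y) ∈ ℚ² with φ(s₂(s₁(μ))) − μ = ρ − φ(ρ), and it satisfies (2x − y) − 1 = (q − 2)/(q + 1) and (x + y) − 1 = −3/(q + 1). Moreover, for an integer q ≥ 2, both of these quantities are ≤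 0 if and only if q = 2. -/
namespace Stmt14

/-- The simple reflection `s₁` of type `A₂` in coordinates w.r.t. the simple roots. -/
def s₁ (v : ℚ × ℚ) : ℚ × ℚ := (v.2 - v.1, v.2)

/-- The simple reflection `s₂` of type `A₂` in coordinates w.r.t. the simple roots. -/
def s₂ (v : ℚ × ℚ) : ℚ × ℚ := (v.1, v.1 - v.2)

/-- The half-sum of positive roots `ρ = α₁ + α₂`. -/
def ρ : ℚ × ℚ := (1, 1)

/-- The twisted isogeny `φ(x, y) = (q·y, q·x)`. -/
def φ (q : ℚ) (v : ℚ × ℚ) : ℚ × ℚ := (q * v.2, q * v.1)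

/-- Type `²A₂` canonical divisor coefficients: for `q ≠ ±1` there is a unique `μ` with
`φ(s₂(s₁(μ))) − μ = ρ − φ(ρ)`; it satisfies `⟨μ, α₁^∨⟩ − 1 = (q − 2)/(q + 1)` and
`⟨μ, α₁^∨ + α₂^∨⟩ − 1 = −3/(q + 1)`; and for an integer `q ≥ 2` both quantities are `≤ 0`
iff `q = 2`. -/
theorem stmt14 :
    (∀ q : ℚ, q ≠ 1 → q ≠ -1 →
      (∃! μ : ℚ × ℚ, φ q (s₂ (s₁ μ)) - μ = ρ - φ q ρ) ∧
      ∀ μ : ℚ × ℚ, φ q (s₂ (s₁ μ)) - μ = ρ - φ q ρ →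
        (2 * μ.1 - μ.2) - 1 = (q - 2) / (q + 1) ∧
        (μ.1 + μ.2) - 1 = -3 / (q + 1)) ∧
    (∀ q : ℤ, 2 ≤ q →
      ((((q : ℚ) - 2) / ((q : ℚ) + 1) ≤ 0 ∧ (-3 : ℚ) / ((q : ℚ) + 1) ≤ 0) ↔ q = 2)) := by

  have key : ∀ q : ℚ, q ≠ 1 → q ≠ -1 → ∀ μ : ℚ × ℚ,
      φ q (s₂ (s₁ μ)) - μ = ρ - φ q ρ → μ = ((q - 1)/(q + 1), -1/(q + 1)) := by
    intro q h1 h2 μ h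
    have hq1 : q + 1 ≠ 0 := fun hc => h2 (by linarith)
    have hq2 : q - 1 ≠ 0 := fun hc => h1 (by linarith)
    simp only [φ, s₁, s₂, ρ, Prod.ext_iff, Prod.fst_sub, Prod.snd_sub] at h ⊢
    obtain ⟨ha, hb⟩ := h
    have hx : μ.1 = (q - 1)/(q + 1) := by field_simp; linarith
    refine ⟨hx, ?_⟩
    have hb' : μ.2 * (q + 1) * (q - 1) = -1 * (q - 1) := by
      have hx' : μ.1 * (q + 1) = q - 1 := by rw [hx]; field_simp
      linear_combination (q + 1) * hb + q * hx'
    have hy : μ.2 * (q + 1) = -1 := mul_right_cancel₀ hq2 hb'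
    rw [eq_div_iff hq1]
    linarith [hy]
  constructor
  · intro q h1 h2
    have hq1 : q + 1 ≠ 0 := fun hc => h2 (by linarith)
    refine ⟨⟨((q - 1)/(q + 1), -1/(q + 1)), ?_, fun μ hμ => key q h1 h2 μ hμ⟩, ?_⟩
    · simp only [φ, s₁, s₂, ρ, Prod.ext_iff, Prod.fst_sub, Prod.snd_sub]
      constructor <;> field_simp <;> ring
    · intro μ hμ
      have := key q h1 h2 μ hμ
      subst this
      constructor <;> field_simp <;> ring
  · intro q hq
    have hpos : (0:ℚ) < (q:ℚ) + 1 := by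
      have : (2:ℚ) ≤ (q:ℚ) := by exact_mod_cast hq
      linarith
    constructor
    · rintro ⟨h1, -⟩
      have : (q:ℚ) - 2 ≤ 0 := by
        by_contra hc
        push_neg at hc
        have := div_pos hc hpos
        linarith
      have : (q:ℚ) ≤ 2 := by linarith
      have : q ≤ 2 := by exact_mod_cast this
      omega
    · rintro rfl
      norm_num


end Stmt14
end

section
/- Type C₂ canonical divisor coefficients: work in ℚ² with the standard orthogonal coordinates e₁, e₂ for the root system C₂ (simple roots α₁ = e₁ − e₂, α₂ = 2e₂, simple coroots α₁^∨ = e₁ − e₂, α₂^∨ = e₂), so that the simple reflections act by s₁(x, y) = (y, x) and s₂(x, y) = (x, −y), and ρ = (2, 1). Let q ∈ ℚ. Then there is a unique μ = (μ₁, μ₂) ∈ ℚ² with q·s₁(s₂(μ)) − μ = (1 − q)·ρ, and it satisfies μ₂ − 1 = (q² − q − 2)/(q² + 1) and (μ₁ + μ₂) − 1 = (2q − 4)/(q² + 1). Moreover, for an integer q ≥ 2, both of these quantities are ≤ 0 if and only if q = 2. -/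
namespace Stmt15

/-- The simple reflection `s₁` of type `C₂` in the standard orthogonal coordinates. -/
def s₁ (v : ℚ × ℚ) : ℚ × ℚ := (v.2, v.1)

/-- The simple reflection `s₂` of type `C₂` in the standard orthogonal coordinates. -/
def s₂ (v : ℚ × ℚ) : ℚ × ℚ := (v.1, -v.2)

/-- The half-sum of positive roots `ρ = (2, 1)`. -/
def ρ : ℚ × ℚ := (2, 1)

/-- Type `C₂` canonical divisor coefficients: for every `q` there is a unique `μ` with
`q·s₁(s₂(μ)) − μ = (1 − q)·ρ`; it satisfies `⟨μ, e₂⟩ − 1 = (q² − q − 2)/(q² + 1)` and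
`⟨μ, e₁ + e₂⟩ − 1 = (2q − 4)/(q² + 1)`; and for an integer `q ≥ 2` both quantities are `≤ 0`
iff `q = 2`. -/
theorem stmt15 :
    (∀ q : ℚ,
      (∃! μ : ℚ × ℚ, q • s₁ (s₂ μ) - μ = (1 - q) • ρ) ∧
      ∀ μ : ℚ × ℚ, q • s₁ (s₂ μ) - μ = (1 - q) • ρ →
        μ.2 - 1 = (q ^ 2 - q - 2) / (q ^ 2 + 1) ∧
        (μ.1 + μ.2) - 1 = (2 * q - 4) / (q ^ 2 + 1)) ∧
    (∀ q : ℤ, 2 ≤ q →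
      ((((q : ℚ) ^ 2 - q - 2) / ((q : ℚ) ^ 2 + 1) ≤ 0 ∧
        (2 * (q : ℚ) - 4) / ((q : ℚ) ^ 2 + 1) ≤ 0) ↔ q = 2)) := by
  constructor
  · intro q
    have hq : (q ^ 2 + 1 : ℚ) ≠ 0 := by positivity
    have key : ∀ μ : ℚ × ℚ, q • s₁ (s₂ μ) - μ = (1 - q) • ρ ↔
        μ = ((3 * q - 2 - q ^ 2) / (q ^ 2 + 1), (2 * q ^ 2 - q - 1) / (q ^ 2 + 1)) := by
      intro μ
      simp only [s₁, s₂, ρ, Prod.smul_mk, Prod.mk_sub_mk, smul_eq_mul, Prod.ext_iff,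
        Prod.fst_sub, Prod.snd_sub, Prod.smul_fst, Prod.smul_snd]
      constructor
      · rintro ⟨h1, h2⟩
        constructor <;> field_simp
        · linear_combination -h1 + q * h2
        · linear_combination -q * h1 - h2
      · rintro ⟨h1, h2⟩
        rw [h1, h2]
        constructor <;> field_simp <;> ring
    refine ⟨⟨_, (key _).2 rfl, fun y hy => (key y).1 hy⟩, fun μ h => ?_⟩
    have hμ := (key μ).1 h
    rw [hμ]
    constructor <;> · simp only []; field_simp; ring
  · intro q hq
    have hq' : (2 : ℚ) ≤ (q : ℚ) := by exact_mod_cast hq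
    have hpos : (0 : ℚ) < (q : ℚ) ^ 2 + 1 := by positivity
    constructor
    · rintro ⟨h1, _⟩
      have h2 : ((q : ℚ) ^ 2 - q - 2) ≤ 0 := by
        by_contra hcon
        push_neg at hcon
        have := div_pos hcon hpos
        linarith
      have : (q : ℚ) ≤ 2 := by nlinarith
      have : q ≤ 2 := by exact_mod_cast this
      omega
    · rintro rfl
      norm_num
end Stmt15
end

section
/- Type ²C₂ canonical divisor coefficients: work in ℚ² with the standard orthogonal coordinates e₁, e₂ for the root system C₂ (simple coroots α₁^∨ = e₁ − e₂, α₂^∨ = e₂), so that s₁(x, y) = (y, x), s₂(x, y) = (x, −y), and ρ = (2, 1), and let φ(x, y) = (q₀·(x + y), q₀·(x − y)) for a rational number q₀. Then: (i) there is a unique μ = (μ₁, μ₂) ∈ ℚ² with φ(s₂(s₁(μ))) − μ = ρ − φ(ρ), and it satisfies (μ₁ − μ₂) − 1 = (4q₀² − 6q₀ + 2)/(2q₀² − 1) and μ₁ − 1 = (−4q₀ + 3)/(2q₀² − 1); (ii) there is a unique ν = (ν₁, ν₂) ∈ ℚ² with φ(s₁(s₂(ν))) − ν = ρ − φ(ρ),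 and it satisfies ν₂ − 1 = (2q₀² − 4q₀ + 2)/(2q₀² − 1) and (ν₁ + ν₂) − 1 = (−6q₀ + 4)/(2q₀² − 1). Moreover, for an integer q₀ ≥ 1, in each of (i) and (ii) both quantities are ≤ 0 if and only if q₀ = 1. -/
namespace Stmt16

/-- The simple reflection `s₁` of type `C₂` in the standard orthogonal coordinates. -/
def s₁ (v : ℚ × ℚ) : ℚ × ℚ := (v.2, v.1)

/-- The simple reflection `s₂` of type `C₂` in the standard orthogonal coordinates. -/
def s₂ (v : ℚ × ℚ) : ℚ × ℚ := (v.1, -v.2)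

/-- The half-sum of positive roots `ρ = (2, 1)`. -/
def ρ : ℚ × ℚ := (2, 1)

/-- The Suzuki isogeny `φ(x, y) = (q₀·(x + y), q₀·(x − y))`. -/
def φ (q₀ : ℚ) (v : ℚ × ℚ) : ℚ × ℚ := (q₀ * (v.1 + v.2), q₀ * (v.1 - v.2))

/-! Both linear systems `φ(w⁻¹ μ) - μ = ρ - φ(ρ)` have determinant `±(2q₀² - 1)`, which never
vanishes on `ℚ` because `2` is not a rational square; Cramer's rule gives the solutions below.
The coefficient `4q₀² - 6q₀ + 2 = 2(2q₀ - 1)(q₀ - 1)`, resp. `2q₀² - 4q₀ + 2 = 2(q₀ - 1)²`,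
is positive for `q₀ > 1` and vanishes at `q₀ = 1`, which settles the sign question already for
rational `q₀ ≥ 1`. -/

theorem two_mul_sq_sub_one_ne_zero (q : ℚ) : 2 * q ^ 2 - 1 ≠ 0 := by
  intro h
  have hsq : IsSquare (2 : ℚ) := ⟨2 * q, by linear_combination -2 * h⟩
  exact (irrational_sqrt_ratCast_iff_of_nonneg (q := 2) zero_le_two).1
    (mod_cast irrational_sqrt_two) hsq

/-- The solution `μ` for `w = s₁s₂`, i.e. `w⁻¹ = s₂s₁`. -/
def μ₁₂ (q : ℚ) : ℚ × ℚ :=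
  ((2 * q ^ 2 - 4 * q + 2) / (2 * q ^ 2 - 1), (-4 * q ^ 2 + 2 * q + 1) / (2 * q ^ 2 - 1))

/-- The solution `ν` for `w = s₂s₁`, i.e. `w⁻¹ = s₁s₂`. -/
def ν₂₁ (q : ℚ) : ℚ × ℚ :=
  ((-2 * q ^ 2 - 2 * q + 2) / (2 * q ^ 2 - 1), (4 * q ^ 2 - 4 * q + 1) / (2 * q ^ 2 - 1))

theorem φ_s₂_s₁_sub_eq_iff (q : ℚ) (μ : ℚ × ℚ) :
    φ q (s₂ (s₁ μ)) - μ = ρ - φ q ρ ↔ μ = μ₁₂ q := by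
  have hq := two_mul_sq_sub_one_ne_zero q
  constructor
  · intro h
    simp only [φ, s₁, s₂, ρ, Prod.ext_iff, Prod.fst_sub, Prod.snd_sub] at h
    obtain ⟨h₁, h₂⟩ := h
    refine Prod.ext ((eq_div_iff hq).2 ?_) ((eq_div_iff hq).2 ?_)
    · linear_combination (1 - q) * h₁ + q * h₂
    · linear_combination q * h₁ + (1 + q) * h₂
  · -- the numerators solve the system scaled by `2q² - 1`, so the defect is a multiple of
    -- `(2q² - 1)(2q² - 1)⁻¹ - 1`
    rintro rfl
    simp only [φ, s₁, s₂, ρ, μ₁₂, Prod.ext_iff, Prod.fst_sub, Prod.snd_sub]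
    constructor
    · linear_combination (2 - 3 * q) * mul_inv_cancel₀ hq
    · linear_combination (1 - q) * mul_inv_cancel₀ hq

theorem φ_s₁_s₂_sub_eq_iff (q : ℚ) (ν : ℚ × ℚ) :
    φ q (s₁ (s₂ ν)) - ν = ρ - φ q ρ ↔ ν = ν₂₁ q := by
  have hq := two_mul_sq_sub_one_ne_zero q
  constructor
  · intro h
    simp only [φ, s₁, s₂, ρ, Prod.ext_iff, Prod.fst_sub, Prod.snd_sub] at h
    obtain ⟨h₁, h₂⟩ := h
    refine Prod.ext ((eq_div_iff hq).2 ?_) ((eq_div_iff hq).2 ?_)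
    · linear_combination (1 + q) * h₁ - q * h₂
    · linear_combination -q * h₁ + (1 - q) * h₂
  · rintro rfl
    simp only [φ, s₁, s₂, ρ, ν₂₁, Prod.ext_iff, Prod.fst_sub, Prod.snd_sub]
    constructor
    · linear_combination (2 - 3 * q) * mul_inv_cancel₀ hq
    · linear_combination (1 - q) * mul_inv_cancel₀ hq

theorem μ₁₂_coeffs (q : ℚ) :
    ((μ₁₂ q).1 - (μ₁₂ q).2) - 1 = (4 * q ^ 2 - 6 * q + 2) / (2 * q ^ 2 - 1) ∧
      (μ₁₂ q).1 - 1 = (-4 * q + 3) / (2 * q ^ 2 - 1) := by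
  have hq := two_mul_sq_sub_one_ne_zero q
  simp only [μ₁₂]
  constructor <;> linear_combination mul_inv_cancel₀ hq

theorem ν₂₁_coeffs (q : ℚ) :
    (ν₂₁ q).2 - 1 = (2 * q ^ 2 - 4 * q + 2) / (2 * q ^ 2 - 1) ∧
      ((ν₂₁ q).1 + (ν₂₁ q).2) - 1 = (-6 * q + 4) / (2 * q ^ 2 - 1) := by
  have hq := two_mul_sq_sub_one_ne_zero q
  simp only [ν₂₁]
  constructor <;> linear_combination mul_inv_cancel₀ hq

theorem μ₁₂_coeffs_nonpos_iff {q : ℚ} (hq : 1 ≤ q) :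
    ((4 * q ^ 2 - 6 * q + 2) / (2 * q ^ 2 - 1) ≤ 0 ∧ (-4 * q + 3) / (2 * q ^ 2 - 1) ≤ 0) ↔
      q = 1 := by
  have hD : 0 < 2 * q ^ 2 - 1 := by nlinarith
  constructor
  · rintro ⟨h, -⟩
    rw [div_le_iff₀ hD, zero_mul] at h
    nlinarith
  · rintro rfl
    norm_num

theorem ν₂₁_coeffs_nonpos_iff {q : ℚ} (hq : 1 ≤ q) :
    ((2 * q ^ 2 - 4 * q + 2) / (2 * q ^ 2 - 1) ≤ 0 ∧ (-6 * q + 4) / (2 * q ^ 2 - 1) ≤ 0) ↔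
      q = 1 := by
  have hD : 0 < 2 * q ^ 2 - 1 := by nlinarith
  constructor
  · rintro ⟨h, -⟩
    rw [div_le_iff₀ hD, zero_mul] at h
    nlinarith
  · rintro rfl
    norm_num

/-- Type `²C₂` canonical divisor coefficients for `w = s₁s₂` and `w = s₂s₁`, and their
non-positivity for integers `q₀ ≥ 1` exactly when `q₀ = 1`. -/
theorem stmt16 :
    (∀ q₀ : ℚ,
      ((∃! μ : ℚ × ℚ, φ q₀ (s₂ (s₁ μ)) - μ = ρ - φ q₀ ρ) ∧
        ∀ μ : ℚ × ℚ, φ q₀ (s₂ (s₁ μ)) - μ = ρ - φ q₀ ρ →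
          (μ.1 - μ.2) - 1 = (4 * q₀ ^ 2 - 6 * q₀ + 2) / (2 * q₀ ^ 2 - 1) ∧
          μ.1 - 1 = (-4 * q₀ + 3) / (2 * q₀ ^ 2 - 1)) ∧
      ((∃! ν : ℚ × ℚ, φ q₀ (s₁ (s₂ ν)) - ν = ρ - φ q₀ ρ) ∧
        ∀ ν : ℚ × ℚ, φ q₀ (s₁ (s₂ ν)) - ν = ρ - φ q₀ ρ →
          ν.2 - 1 = (2 * q₀ ^ 2 - 4 * q₀ + 2) / (2 * q₀ ^ 2 - 1) ∧
          (ν.1 + ν.2) - 1 = (-6 * q₀ + 4) / (2 * q₀ ^ 2 - 1))) ∧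
    (∀ q₀ : ℤ, 1 ≤ q₀ →
      (((4 * (q₀ : ℚ) ^ 2 - 6 * q₀ + 2) / (2 * (q₀ : ℚ) ^ 2 - 1) ≤ 0 ∧
        (-4 * (q₀ : ℚ) + 3) / (2 * (q₀ : ℚ) ^ 2 - 1) ≤ 0) ↔ q₀ = 1) ∧
      (((2 * (q₀ : ℚ) ^ 2 - 4 * q₀ + 2) / (2 * (q₀ : ℚ) ^ 2 - 1) ≤ 0 ∧
        (-6 * (q₀ : ℚ) + 4) / (2 * (q₀ : ℚ) ^ 2 - 1) ≤ 0) ↔ q₀ = 1)) := by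
  refine ⟨fun q => ⟨⟨?_, ?_⟩, ?_, ?_⟩, fun q hq => ?_⟩
  · exact ⟨μ₁₂ q, (φ_s₂_s₁_sub_eq_iff q _).2 rfl, fun μ hμ => (φ_s₂_s₁_sub_eq_iff q μ).1 hμ⟩
  · intro μ hμ
    rw [(φ_s₂_s₁_sub_eq_iff q μ).1 hμ]
    exact μ₁₂_coeffs q
  · exact ⟨ν₂₁ q, (φ_s₁_s₂_sub_eq_iff q _).2 rfl, fun ν hν => (φ_s₁_s₂_sub_eq_iff q ν).1 hν⟩
  · intro ν hν
    rw [(φ_s₁_s₂_sub_eq_iff q ν).1 hν]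
    exact ν₂₁_coeffs q
  · have hq' : (1 : ℚ) ≤ q := mod_cast hq
    rw [μ₁₂_coeffs_nonpos_iff hq', ν₂₁_coeffs_nonpos_iff hq', Int.cast_eq_one]
    exact ⟨Iff.rfl, Iff.rfl⟩

end Stmt16
end

section
/- Type ²G₂ canonical divisor coefficients: work in ℚ² with coordinates taken with respect to the simple roots α₁ (short), α₂ (long) of the root system G₂, so that the simple reflections act by s₁(x, y) = (3y − x, y) and s₂(x, y) = (x, x − y), the half-sum of positive roots is ρ = (5, 3), the relevant coroot pairings are ⟨(x, y), α₂^∨⟩ = −x + 2y, ⟨(x, y), α₁^∨⟩ = 2x − 3y, ⟨(x, y), α₁^∨ + α₂^∨⟩ = x − y, and let φ(x, y) = (3·q₀·y, q₀·x) for a rational number q₀. Then: (i) there is a unique μ = (x, y) ∈ ℚ² with φ(s₁(s₂(μ))) − μ = ρ − φ(ρ), and it satisfies (−x + 2y) − 1 = (3q₀² − 5q₀ + 2)/(3q₀² − 1) and (−x + 3y) − 1 = (−9q₀ + 5)/(3q₀² − 1); (ii) there is a unique ν = (x', y') ∈ ℚ² with φ(s₂(s₁(ν))) − ν = ρ − φ(ρ),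 and it satisfies (2x' − 3y') − 1 = (9q₀² − 9q₀ + 2)/(3q₀² − 1) and (x' − y') − 1 = (−5q₀ + 3)/(3q₀² − 1). Moreover, for an integer q₀ ≥ 1: in case (i) both quantities are ≤ 0 if and only if q₀ = 1, while in case (ii) the first quantity is always > 0. -/
namespace Stmt17

/-- The simple reflection `s₁` of type `G₂` in coordinates w.r.t. the simple roots. -/
def s₁ (v : ℚ × ℚ) : ℚ × ℚ := (3 * v.2 - v.1, v.2)

/-- The simple reflection `s₂` of type `G₂` in coordinates w.r.t. the simple roots. -/
def s₂ (v : ℚ × ℚ) : ℚ × ℚ := (v.1, v.1 - v.2)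

/-- The half-sum of positive roots `ρ = (5, 3)` in simple-root coordinates. -/
def ρ : ℚ × ℚ := (5, 3)

/-- The Ree isogeny `φ(x, y) = (3·q₀·y, q₀·x)`. -/
def φ (q₀ : ℚ) (v : ℚ × ℚ) : ℚ × ℚ := (3 * q₀ * v.2, q₀ * v.1)


lemma hden (q : ℚ) : 3 * q ^ 2 - 1 ≠ 0 := by
  intro h
  have hq : (3 * q) ^ 2 = 3 := by nlinarith
  have h3 : ((3 * q : ℚ) : ℝ) ^ 2 = 3 := by exact_mod_cast congrArg (Rat.cast (K := ℝ)) hq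
  have hirr : Irrational (Real.sqrt 3) := by
    exact_mod_cast (Nat.prime_three).irrational_sqrt
  have : Real.sqrt 3 = |((3 * q : ℚ) : ℝ)| := by
    rw [← h3, Real.sqrt_sq_eq_abs]
  rw [this] at hirr
  exact hirr ⟨|3 * q|, by push_cast; simp⟩

lemma case1 (q : ℚ) (μ : ℚ × ℚ) (h : φ q (s₁ (s₂ μ)) - μ = ρ - φ q ρ) :
    μ = ((12 * q ^ 2 + 3 * q - 5) / (1 - 3 * q ^ 2),
         (3 * q ^ 2 + 4 * q - 3) / (1 - 3 * q ^ 2)) := by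
  have hD : 1 - 3 * q ^ 2 ≠ 0 := by
    have := hden q; intro h'; apply this; linarith
  have hN : 1 - q ^ 2 * 3 ≠ 0 := by contrapose! hD; linarith
  obtain ⟨x, y⟩ := μ
  simp only [φ, s₁, s₂, ρ, Prod.mk_sub_mk, Prod.mk.injEq] at h ⊢
  obtain ⟨h1, h2⟩ := h
  constructor
  · field_simp
    linear_combination (-(3 * q + 1)) * h1 + 3 * q * h2
  · field_simp
    linear_combination (-2 * q) * h1 + (3 * q - 1) * h2

lemma case2 (q : ℚ) (ν : ℚ × ℚ) (h : φ q (s₂ (s₁ ν)) - ν = ρ - φ q ρ) :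
    ν = ((3 * q ^ 2 + 6 * q - 5) / (1 - 3 * q ^ 2),
         (6 * q ^ 2 + q - 3) / (1 - 3 * q ^ 2)) := by
  have hD : 1 - 3 * q ^ 2 ≠ 0 := by
    have := hden q; intro h'; apply this; linarith
  have hN : 1 - q ^ 2 * 3 ≠ 0 := by contrapose! hD; linarith
  obtain ⟨x, y⟩ := ν
  simp only [φ, s₁, s₂, ρ, Prod.mk_sub_mk, Prod.mk.injEq] at h ⊢
  obtain ⟨h1, h2⟩ := h
  constructor
  · field_simp
    linear_combination (3 * q - 1) * h1 + (-6 * q) * h2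
  · field_simp
    linear_combination q * h1 + (-(3 * q + 1)) * h2

/-- Type `²G₂` canonical divisor coefficients for `w = s₂s₁` and `w = s₁s₂`, and their
behavior for integers `q₀ ≥ 1`: in case (i) both are `≤ 0` iff `q₀ = 1`, in case (ii) the
first quantity is always positive. -/
theorem stmt17 :
    (∀ q₀ : ℚ,
      ((∃! μ : ℚ × ℚ, φ q₀ (s₁ (s₂ μ)) - μ = ρ - φ q₀ ρ) ∧
        ∀ μ : ℚ × ℚ, φ q₀ (s₁ (s₂ μ)) - μ = ρ - φ q₀ ρ →
          (-μ.1 + 2 * μ.2) - 1 = (3 * q₀ ^ 2 - 5 * q₀ + 2) / (3 * q₀ ^ 2 - 1) ∧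
          (-μ.1 + 3 * μ.2) - 1 = (-9 * q₀ + 5) / (3 * q₀ ^ 2 - 1)) ∧
      ((∃! ν : ℚ × ℚ, φ q₀ (s₂ (s₁ ν)) - ν = ρ - φ q₀ ρ) ∧
        ∀ ν : ℚ × ℚ, φ q₀ (s₂ (s₁ ν)) - ν = ρ - φ q₀ ρ →
          (2 * ν.1 - 3 * ν.2) - 1 = (9 * q₀ ^ 2 - 9 * q₀ + 2) / (3 * q₀ ^ 2 - 1) ∧
          (ν.1 - ν.2) - 1 = (-5 * q₀ + 3) / (3 * q₀ ^ 2 - 1))) ∧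
    (∀ q₀ : ℤ, 1 ≤ q₀ →
      (((3 * (q₀ : ℚ) ^ 2 - 5 * q₀ + 2) / (3 * (q₀ : ℚ) ^ 2 - 1) ≤ 0 ∧
        (-9 * (q₀ : ℚ) + 5) / (3 * (q₀ : ℚ) ^ 2 - 1) ≤ 0) ↔ q₀ = 1) ∧
      0 < (9 * (q₀ : ℚ) ^ 2 - 9 * q₀ + 2) / (3 * (q₀ : ℚ) ^ 2 - 1)) := by
  constructor
  · intro q
    have hD : 1 - 3 * q ^ 2 ≠ 0 := by
      have := hden q; intro h'; apply this; linarith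
    have hD' : 3 * q ^ 2 - 1 ≠ 0 := hden q
    have hN : 1 - q ^ 2 * 3 ≠ 0 := by contrapose! hD; linarith
    have hN' : -1 + q ^ 2 * 3 ≠ 0 := by contrapose! hD; linarith
    refine ⟨⟨⟨_, ?_, fun μ hμ => case1 q μ hμ⟩, ?_⟩, ⟨_, ?_, fun ν hν => case2 q ν hν⟩, ?_⟩
    · show φ q (s₁ (s₂ ((12 * q ^ 2 + 3 * q - 5) / (1 - 3 * q ^ 2),
         (3 * q ^ 2 + 4 * q - 3) / (1 - 3 * q ^ 2)))) - _ = _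
      simp only [φ, s₁, s₂, ρ, Prod.mk_sub_mk, Prod.mk.injEq]
      constructor <;> (field_simp; ring)
    · intro μ hμ
      rw [case1 q μ hμ]
      constructor <;> (rw [eq_div_iff hD']; field_simp; ring)
    · show φ q (s₂ (s₁ ((3 * q ^ 2 + 6 * q - 5) / (1 - 3 * q ^ 2),
         (6 * q ^ 2 + q - 3) / (1 - 3 * q ^ 2)))) - _ = _
      simp only [φ, s₁, s₂, ρ, Prod.mk_sub_mk, Prod.mk.injEq]
      constructor <;> (field_simp; ring)
    · intro ν hν
      rw [case2 q ν hν]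
      constructor <;> (field_simp; ring)
  · intro q hq
    have hq' : (1 : ℚ) ≤ (q : ℚ) := by exact_mod_cast hq
    have hD : (0 : ℚ) < 3 * (q : ℚ) ^ 2 - 1 := by nlinarith
    constructor
    · constructor
      · rintro ⟨h1, h2⟩
        have hn1 : 3 * (q : ℚ) ^ 2 - 5 * q + 2 ≤ 0 := by
          by_contra hc
          push_neg at hc
          have := div_pos hc hD
          linarith
        have : (q : ℚ) ≤ 1 := by nlinarith
        have : q ≤ 1 := by exact_mod_cast this
        omega
      · rintro rfl
        norm_num
    · apply div_pos _ hD
      nlinarith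


end Stmt17
end
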